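/- Let m and n be nonempty finite types, and let A be an m×m complex matrix and B an n×n complex matrix. Then the spectrum of the Kronecker product A ⊗ B equals the set of products {α·β : α ∈ spectrum(A), β ∈ spectrum(B)}. -/

import Mathlib

/-!
`A ⊗ B = (A ⊗ 1)(1 ⊗ B)` is a product of two commuting matrices whose spectra lie in those of
`A` and of `B`. Commuting endomorphisms of a finite-dimensional space over an algebraically closed
field have a common eigenvector in every eigenspace of their product, so every eigenvalue of the
product is a product of eigenvalues. Conversely, if `Av = αv` and `Bw = βw` then
`v ⊗ w` is an eigenvector of `A ⊗ B` for `αβ`.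
-/

open Kronecker

open scoped Pointwise

namespace Module.End

variable {K V : Type*} [Field K] [IsAlgClosed K] [AddCommGroup V] [Module K V]
  [FiniteDimensional K V]

theorem exists_hasEigenvector_mem_of_mapsTo {f : End K V} {p : Submodule K V} (hp : p ≠ ⊥)
    (hf : Set.MapsTo f p p) : ∃ μ v, v ∈ p ∧ f.HasEigenvector μ v := by
  have : Nontrivial p := Submodule.nontrivial_iff_ne_bot.2 hp
  obtain ⟨μ, hμ⟩ := exists_eigenvalue (f.restrict hf)
  obtain ⟨w, hw⟩ := hμ.exists_hasEigenvector
  exact ⟨μ, w, w.2, eigenspace_restrict_le_eigenspace f hf μ ⟨w, hw.1, rfl⟩,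
    by simpa using hw.2⟩

theorem spectrum_mul_subset_of_commute {f g : End K V} (h : Commute f g) :
    spectrum K (f * g) ⊆ spectrum K f * spectrum K g := by
  intro z hz
  rw [← hasEigenvalue_iff_mem_spectrum] at hz
  -- Find a common eigenvector of `f * g`, `f` and `g`: each space below is invariant under the
  -- next map because the three maps commute.
  obtain ⟨α, v, hvz, hvα⟩ := exists_hasEigenvector_mem_of_mapsTo hz
    (mapsTo_genEigenspace_of_comm ((Commute.refl f).mul_left h.symm) z 1)
  have hE : (f * g).eigenspace z ⊓ f.eigenspace α ≠ ⊥ :=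
    Submodule.ne_bot_iff _ |>.2 ⟨v, ⟨hvz, hvα.1⟩, hvα.2⟩
  have hg : Set.MapsTo g ↑((f * g).eigenspace z ⊓ f.eigenspace α)
      ↑((f * g).eigenspace z ⊓ f.eigenspace α) := fun x hx =>
    ⟨mapsTo_genEigenspace_of_comm (h.mul_left (Commute.refl g)) z 1 hx.1,
      mapsTo_genEigenspace_of_comm h α 1 hx.2⟩
  obtain ⟨β, u, ⟨huz, huα⟩, huβ⟩ := exists_hasEigenvector_mem_of_mapsTo hE hg
  refine ⟨α, (hasEigenvalue_of_hasEigenvector ⟨huα, huβ.2⟩).mem_spectrum,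
    β, (hasEigenvalue_of_hasEigenvector huβ).mem_spectrum, ?_⟩
  have hfu : f u = α • u := mem_eigenspace_iff.1 huα
  have : (α * β) • u = z • u := by
    rw [← mem_eigenspace_iff.1 huz, mul_apply, huβ.apply_eq_smul, map_smul, hfu, smul_smul,
      mul_comm]
  exact smul_left_injective K huβ.2 this

end Module.End

namespace Matrix

section CommRing

variable {R l m n p : Type*} [CommRing R]

theorem sub_kronecker (A₁ A₂ : Matrix l m R) (B : Matrix n p R) :
    (A₁ - A₂) ⊗ₖ B = A₁ ⊗ₖ B - A₂ ⊗ₖ B := by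
  ext
  simp [sub_mul]

theorem kronecker_sub (A : Matrix l m R) (B₁ B₂ : Matrix n p R) :
    A ⊗ₖ (B₁ - B₂) = A ⊗ₖ B₁ - A ⊗ₖ B₂ := by
  ext
  simp [mul_sub]

variable [Fintype m] [DecidableEq m] [Fintype n] [DecidableEq n]

theorem algebraMap_kronecker_one (r : R) :
    algebraMap R (Matrix m m R) r ⊗ₖ (1 : Matrix n n R) = algebraMap R _ r := by
  rw [Algebra.algebraMap_eq_smul_one, Algebra.algebraMap_eq_smul_one, smul_kronecker,
    one_kronecker_one]

theorem one_kronecker_algebraMap (r : R) :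
    (1 : Matrix m m R) ⊗ₖ algebraMap R (Matrix n n R) r = algebraMap R _ r := by
  rw [Algebra.algebraMap_eq_smul_one, Algebra.algebraMap_eq_smul_one, kronecker_smul,
    one_kronecker_one]

theorem spectrum_kronecker_one_subset (A : Matrix m m R) :
    spectrum R (A ⊗ₖ (1 : Matrix n n R)) ⊆ spectrum R A := fun r hr hA =>
  hr <| spectrum.mem_resolventSet_iff.2 <| by
    simpa only [sub_kronecker, algebraMap_kronecker_one] using
      IsUnit.kronecker (spectrum.mem_resolventSet_iff.1 hA) (isUnit_one (M := Matrix n n R))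

theorem spectrum_one_kronecker_subset (B : Matrix n n R) :
    spectrum R ((1 : Matrix m m R) ⊗ₖ B) ⊆ spectrum R B := fun r hr hB =>
  hr <| spectrum.mem_resolventSet_iff.2 <| by
    simpa only [kronecker_sub, one_kronecker_algebraMap] using
      IsUnit.kronecker (isUnit_one (M := Matrix m m R)) (spectrum.mem_resolventSet_iff.1 hB)

end CommRing

variable {K m n : Type*} [Field K] [Fintype m] [DecidableEq m] [Fintype n] [DecidableEq n]

theorem mem_spectrum_iff_exists_mulVec_eq_smul {A : Matrix n n K} {μ : K} :
    μ ∈ spectrum K A ↔ ∃ v ≠ 0, A *ᵥ v = μ • v := by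
  rw [← spectrum_toLin', ← Module.End.hasEigenvalue_iff_mem_spectrum,
    Module.End.hasEigenvalue_iff, Submodule.ne_bot_iff]
  simp only [Module.End.mem_eigenspace_iff, toLin'_apply, and_comm]

theorem mul_mem_spectrum_kronecker {A : Matrix m m K} {B : Matrix n n K} {α β : K}
    (hα : α ∈ spectrum K A) (hβ : β ∈ spectrum K B) : α * β ∈ spectrum K (A ⊗ₖ B) := by
  obtain ⟨v, hv0, hv⟩ := mem_spectrum_iff_exists_mulVec_eq_smul.1 hα
  obtain ⟨w, hw0, hw⟩ := mem_spectrum_iff_exists_mulVec_eq_smul.1 hβ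
  refine mem_spectrum_iff_exists_mulVec_eq_smul.2 ⟨vec (vecMulVec w v), ?_, ?_⟩
  · obtain ⟨i, hi⟩ := Function.ne_iff.1 hv0
    obtain ⟨j, hj⟩ := Function.ne_iff.1 hw0
    exact fun h => mul_ne_zero hj hi (congrFun h (i, j))
  · rw [kronecker_mulVec_vec, mul_vecMulVec, vecMulVec_mul, vecMul_transpose, hv, hw,
      smul_vecMulVec, vecMulVec_smul, smul_smul, vec_smul, mul_comm]

theorem spectrum_mul_subset_of_commute [IsAlgClosed K] {A B : Matrix n n K} (h : Commute A B) :
    spectrum K (A * B) ⊆ spectrum K A * spectrum K B := by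
  have := Module.End.spectrum_mul_subset_of_commute (h.map (toLinAlgEquiv' (R := K)))
  rwa [← map_mul, AlgEquiv.spectrum_eq, AlgEquiv.spectrum_eq, AlgEquiv.spectrum_eq] at this

theorem spectrum_kronecker [IsAlgClosed K] (A : Matrix m m K) (B : Matrix n n K) :
    spectrum K (A ⊗ₖ B) = spectrum K A * spectrum K B := by
  refine subset_antisymm ?_
    (Set.mul_subset_iff.2 fun _ hα _ hβ => mul_mem_spectrum_kronecker hα hβ)
  have hAB : A ⊗ₖ (1 : Matrix n n K) * (1 : Matrix m m K) ⊗ₖ B = A ⊗ₖ B := by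
    rw [← mul_kronecker_mul, mul_one, one_mul]
  have hBA : (1 : Matrix m m K) ⊗ₖ B * A ⊗ₖ (1 : Matrix n n K) = A ⊗ₖ B := by
    rw [← mul_kronecker_mul, mul_one, one_mul]
  rw [← hAB]
  exact (spectrum_mul_subset_of_commute (hAB.trans hBA.symm)).trans
    (Set.mul_subset_mul (spectrum_kronecker_one_subset A) (spectrum_one_kronecker_subset B))

end Matrix

theorem stmt_1 {m n : Type*} [Fintype m] [DecidableEq m]
    [Fintype n] [DecidableEq n]
    (A : Matrix m m ℂ) (B : Matrix n n ℂ) :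
    spectrum ℂ (A ⊗ₖ B) =
      {z : ℂ | ∃ α ∈ spectrum ℂ A, ∃ β ∈ spectrum ℂ B, z = α * β} := by
  ext z
  simp only [Matrix.spectrum_kronecker, Set.mem_mul, Set.mem_ofPred_eq, eq_comm]
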